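/- arXiv:1102.5375 — 7 statements merged into one kernel-verified Lean document; each statement's English description precedes it below -/
import Mathlib

section
/- Let (f_n)_{n≥0} be a sequence of real numbers with f_0 = 1, f_1 > 0, and f_{n+1} f_{n-1} ≥ f_n^2 for all n ≥ 1. Define (f̂_n)_{n≥1} by the recursion f_n = Σ_{k=1}^n f̂_k f_{n-k} for n ≥ 1 (i.e., the power series 1 - 1/f(z) where f(z) = Σ f_n z^n, as a formal power series identity). Then f̂_n ≥ 0 for all n ≥ 1. -/
/-!
Log-convexity of a positive sequence means that the ratios `f (n + 1) / f n` increase.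
Isolating the top term of the recursion at `n + 1` gives
`fhat (n + 1) = f (n + 1) - ∑_{k=1}^n fhat k * f (n + 1 - k)`, and, by induction on `n`, every
`fhat k` in that sum is non-negative. Since `f (n + 1 - k) / f (n - k) ≤ f (n + 1) / f n`,
the sum is at most `f (n + 1) / f n` times `∑_{k=1}^n fhat k * f (n - k)`, which is at most `f n`.
-/

open Finset

section LogConvex

variable {f : ℕ → ℝ}

theorem pos_of_sq_le_mul (h0 : 0 < f 0) (h1 : 0 < f 1)
    (hconv : ∀ n, f (n + 1) ^ 2 ≤ f (n + 2) * f n) (n : ℕ) : 0 < f n := by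
  induction n using Nat.twoStepInduction with
  | zero => exact h0
  | one => exact h1
  | more n hn hn1 =>
    exact pos_of_mul_pos_left ((pow_pos hn1 2).trans_le (hconv n)) hn.le

theorem monotone_succ_div_of_sq_le_mul (hpos : ∀ n, 0 < f n)
    (hconv : ∀ n, f (n + 1) ^ 2 ≤ f (n + 2) * f n) :
    Monotone fun n => f (n + 1) / f n :=
  monotone_nat_of_le_succ fun n => by
    rw [div_le_div_iff₀ (hpos n) (hpos (n + 1)), ← sq]
    exact hconv n

theorem sum_mul_succ_sub_le {g : ℕ → ℝ} (hpos : ∀ n, 0 < f n)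
    (hmono : Monotone fun n => f (n + 1) / f n) {m : ℕ} (hg : ∀ k ∈ Icc 1 m, 0 ≤ g k)
    (hrec : ∑ k ∈ Icc 1 m, g k * f (m - k) ≤ f m) :
    ∑ k ∈ Icc 1 m, g k * f (m + 1 - k) ≤ f (m + 1) := by
  have hterm : ∀ k ∈ Icc 1 m, g k * f (m + 1 - k) * f m ≤ f (m + 1) * (g k * f (m - k)) := by
    intro k hk
    have hratio : f (m - k + 1) * f m ≤ f (m + 1) * f (m - k) := by
      rw [← div_le_div_iff₀ (hpos _) (hpos _)]
      exact hmono (Nat.sub_le m k)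
    rw [Nat.sub_add_comm (mem_Icc.1 hk).2]
    nlinarith [hg k hk]
  refine le_of_mul_le_mul_right ?_ (hpos m)
  calc (∑ k ∈ Icc 1 m, g k * f (m + 1 - k)) * f m
      ≤ f (m + 1) * ∑ k ∈ Icc 1 m, g k * f (m - k) := by
        rw [sum_mul, mul_sum]
        exact sum_le_sum hterm
    _ ≤ f (m + 1) * f m := mul_le_mul_of_nonneg_left hrec (hpos _).le

end LogConvex

/-- Kaluza's theorem: if `f 0 = 1`, `f 1 > 0` and the sequence `f` is
log-convex, then the coefficients `fhat` of `1 - 1/f(z)`, determined by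
`f n = ∑_{k=1}^n fhat k * f (n-k)` for `n ≥ 1`, are all non-negative. -/
theorem kaluza_nonneg (f fhat : ℕ → ℝ) (hf0 : f 0 = 1) (hf1 : 0 < f 1)
    (hconv : ∀ n : ℕ, 1 ≤ n → f n ^ 2 ≤ f (n + 1) * f (n - 1))
    (hrec : ∀ n : ℕ, 1 ≤ n → f n = ∑ k ∈ Finset.Icc 1 n, fhat k * f (n - k)) :
    ∀ n : ℕ, 1 ≤ n → 0 ≤ fhat n := by
  have hconv' : ∀ n, f (n + 1) ^ 2 ≤ f (n + 2) * f n := fun n => hconv (n + 1) n.succ_pos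
  have hpos := pos_of_sq_le_mul (hf0 ▸ one_pos) hf1 hconv'
  have hmono := monotone_succ_div_of_sq_le_mul hpos hconv'
  intro n hn
  induction n using Nat.strong_induction_on with
  | _ n ih =>
    obtain ⟨m, rfl⟩ := Nat.exists_eq_add_of_le' hn
    have htop : f (m + 1) = ∑ k ∈ Icc 1 m, fhat k * f (m + 1 - k) + fhat (m + 1) := by
      simpa [sum_Icc_succ_top, hf0] using hrec (m + 1) (by omega)
    have hprev : ∑ k ∈ Icc 1 m, fhat k * f (m - k) ≤ f m := by
      rcases Nat.eq_zero_or_pos m with rfl | hm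
      · simp [hf0]
      · exact (hrec m hm).ge
    have hg : ∀ k ∈ Icc 1 m, 0 ≤ fhat k := fun k hk =>
      ih k (Nat.lt_succ_of_le (mem_Icc.1 hk).2) (mem_Icc.1 hk).1
    linarith [sum_mul_succ_sub_le hpos hmono hg hprev]
end

section
/- Let (f_n)_{n≥0} be a sequence of real numbers with f_0 = 1, f_1 > 0, and f_{n+1} f_{n-1} > f_n^2 for all n ≥ 1. Define (f̂_n)_{n≥1} by f_n = Σ_{k=1}^n f̂_k f_{n-k} for n ≥ 1. Then f̂_n > 0 for all n ≥ 1. -/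
/-!
Eliminating `fhat k` for `k ≤ n` between the recurrences at `n` and `n + 1` gives
`f n * fhat (n + 1) = ∑_{k=1}^n fhat k * (f (n + 1) * f (n - k) - f (n + 1 - k) * f n)`.
Strict log-convexity makes the ratios `f (j + 1) / f j` strictly increasing, so every bracket
is positive, and positivity of `fhat` propagates by strong induction.
-/

open Finset

def StrictLogConvex (f : ℕ → ℝ) : Prop :=
  ∀ n, f (n + 1) ^ 2 < f (n + 2) * f n

namespace StrictLogConvex

variable {f : ℕ → ℝ}

theorem pos (hf : StrictLogConvex f) (h0 : 0 < f 0) (h1 : 0 < f 1) : ∀ n, 0 < f n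
  | 0 => h0
  | 1 => h1
  | n + 2 => pos_of_mul_pos_left ((sq_nonneg _).trans_lt (hf n)) (hf.pos h0 h1 n).le

theorem strictMono_div (hf : StrictLogConvex f) (hpos : ∀ n, 0 < f n) :
    StrictMono fun n => f (n + 1) / f n :=
  strictMono_nat_of_lt_succ fun n => by
    rw [div_lt_div_iff₀ (hpos n) (hpos (n + 1)), ← sq]
    exact hf n

theorem mul_lt_mul_of_lt (hf : StrictLogConvex f) (hpos : ∀ n, 0 < f n) {a b : ℕ}
    (hab : a < b) : f (a + 1) * f b < f (b + 1) * f a :=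
  (div_lt_div_iff₀ (hpos a) (hpos b)).1 (hf.strictMono_div hpos hab)

end StrictLogConvex

theorem mul_succ_eq_sum_of_convolution {f g : ℕ → ℝ} {n : ℕ} (h0 : f 0 = 1)
    (hn : f n = ∑ k ∈ Icc 1 n, g k * f (n - k))
    (hsucc : f (n + 1) = ∑ k ∈ Icc 1 (n + 1), g k * f (n + 1 - k)) :
    f n * g (n + 1) = ∑ k ∈ Icc 1 n, g k * (f (n + 1) * f (n - k) - f (n + 1 - k) * f n) := by
  rw [sum_Icc_succ_top (by omega), Nat.sub_self, h0, mul_one] at hsucc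
  have hsplit : ∑ k ∈ Icc 1 n, g k * (f (n + 1) * f (n - k) - f (n + 1 - k) * f n) =
      f (n + 1) * ∑ k ∈ Icc 1 n, g k * f (n - k) - (∑ k ∈ Icc 1 n, g k * f (n + 1 - k)) * f n := by
    rw [mul_sum, sum_mul, ← sum_sub_distrib]
    exact sum_congr rfl fun k _ => by ring
  rw [hsplit, ← hn]
  linear_combination (-f n) * hsucc

theorem StrictLogConvex.pos_succ_of_convolution {f g : ℕ → ℝ} {n : ℕ} (hf : StrictLogConvex f)
    (hpos : ∀ n, 0 < f n) (h0 : f 0 = 1) (hn : f n = ∑ k ∈ Icc 1 n, g k * f (n - k))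
    (hsucc : f (n + 1) = ∑ k ∈ Icc 1 (n + 1), g k * f (n + 1 - k)) (hn1 : 1 ≤ n)
    (hg : ∀ k ∈ Icc 1 n, 0 < g k) : 0 < g (n + 1) := by
  have hterm : ∀ k ∈ Icc 1 n, 0 < g k * (f (n + 1) * f (n - k) - f (n + 1 - k) * f n) := by
    intro k hk
    have hk := mem_Icc.1 hk
    have hcross := hf.mul_lt_mul_of_lt hpos (a := n - k) (b := n) (by omega)
    rw [show n - k + 1 = n + 1 - k by omega] at hcross
    exact mul_pos (hg k (mem_Icc.2 hk)) (sub_pos.2 hcross)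
  have hsum := sum_pos hterm ⟨1, mem_Icc.2 ⟨le_rfl, hn1⟩⟩
  rw [← mul_succ_eq_sum_of_convolution h0 hn hsucc] at hsum
  exact pos_of_mul_pos_right hsum (hpos n).le

/-- Strict Kaluza theorem: if `f 0 = 1`, `f 1 > 0` and the sequence `f` is
strictly log-convex, then the coefficients `fhat` of `1 - 1/f(z)`, determined
by `f n = ∑_{k=1}^n fhat k * f (n-k)` for `n ≥ 1`, are all positive. -/
theorem kaluza_pos (f fhat : ℕ → ℝ) (hf0 : f 0 = 1) (hf1 : 0 < f 1)
    (hconv : ∀ n : ℕ, 1 ≤ n → f n ^ 2 < f (n + 1) * f (n - 1))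
    (hrec : ∀ n : ℕ, 1 ≤ n → f n = ∑ k ∈ Finset.Icc 1 n, fhat k * f (n - k)) :
    ∀ n : ℕ, 1 ≤ n → 0 < fhat n := by
  have hf : StrictLogConvex f := fun n => by simpa using hconv (n + 1) (by omega)
  have hpos := hf.pos (hf0 ▸ one_pos) hf1
  intro n hn
  induction n using Nat.strong_induction_on with
  | _ n ih =>
    match n, hn with
    | 1, _ => simpa [hf0, hrec 1 le_rfl] using hf1
    | m + 2, _ =>
      exact hf.pos_succ_of_convolution hpos hf0 (hrec (m + 1) (by omega)) (hrec (m + 2) (by omega))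
        (by omega) fun k hk => ih k (by grind) (mem_Icc.1 hk).1
end

section
/- Let f(z) = Σ_{n≥0} f_n z^n be a formal power series with f_0 = 1 such that the formal power series f̂(z) = 1 - 1/f(z) has non-negative coefficients, and let (h_n)_{n≥0} be a non-decreasing sequence of non-negative real numbers. Set g(z) = Σ_{n≥0} h_n f_n z^n. Then all coefficients of the formal power series g(z)/f(z) are non-negative. -/
/-!
Put `φ = 1 - 1/f`, so that `f = 1 + f φ` and `g/f = g (1 - φ)`. Since `φ` has no constant term,
the relation `f = 1 + f φ` determines `f` recursively with non-negative coefficients. Using it to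
expand `f_n` in the `n`-th coefficient `h_n f_n - ∑_{i+j=n} h_i f_i φ_j` of `g (1 - φ)` gives
`h_n [n = 0] + ∑_{i+j=n} (h_n - h_i) f_i φ_j`, and every term is non-negative because `h` is
non-decreasing.
-/

open PowerSeries Finset

namespace PowerSeries

variable {R : Type*}

theorem coeff_nonneg_of_eq_one_add_mul [Semiring R] [PartialOrder R] [IsOrderedRing R]
    {f φ : R⟦X⟧} (hf : f = 1 + f * φ) (hφ0 : constantCoeff φ = 0)
    (hφ : ∀ n, 0 ≤ coeff n φ) (n : ℕ) : 0 ≤ coeff n f := by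
  induction n using Nat.strong_induction_on with
  | _ n ih =>
    rw [hf, map_add, coeff_mul]
    refine add_nonneg (by rw [coeff_one]; split_ifs <;> simp) (sum_nonneg fun p hp => ?_)
    rcases Nat.eq_zero_or_pos p.2 with hp2 | hp2
    · simp [hp2, hφ0]
    · exact mul_nonneg (ih p.1 (by rw [HasAntidiagonal.mem_antidiagonal] at hp; omega)) (hφ p.2)

theorem coeff_mk_mul_coeff_mul_one_sub [CommRing R] (h : ℕ → R) {f φ : R⟦X⟧}
    (hf : f = 1 + f * φ) (n : ℕ) :
    coeff n (mk (fun k => h k * coeff k f) * (1 - φ)) =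
      h n * coeff n (1 : R⟦X⟧) +
        ∑ p ∈ antidiagonal n, (h n - h p.1) * (coeff p.1 f * coeff p.2 φ) := by
  have hfn : coeff n f =
      coeff n (1 : R⟦X⟧) + ∑ p ∈ antidiagonal n, coeff p.1 f * coeff p.2 φ := by
    conv_lhs => rw [hf]
    rw [map_add, coeff_mul]
  simp only [mul_sub, mul_one, map_sub, coeff_mk, coeff_mul, sub_mul, sum_sub_distrib, ← mul_sum,
    hfn, mul_add, mul_assoc]
  ring

theorem coeff_mk_mul_coeff_mul_one_sub_nonneg [CommRing R] [PartialOrder R] [IsOrderedRing R]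
    {h : ℕ → R} (hmono : Monotone h) (hnonneg : ∀ n, 0 ≤ h n) {f φ : R⟦X⟧}
    (hf : f = 1 + f * φ) (hφ0 : constantCoeff φ = 0) (hφ : ∀ n, 0 ≤ coeff n φ) (n : ℕ) :
    0 ≤ coeff n (mk (fun k => h k * coeff k f) * (1 - φ)) := by
  rw [coeff_mk_mul_coeff_mul_one_sub h hf]
  refine add_nonneg (mul_nonneg (hnonneg n) (by rw [coeff_one]; split_ifs <;> simp))
    (sum_nonneg fun p hp => mul_nonneg (sub_nonneg.2 (hmono ?_))
      (mul_nonneg (coeff_nonneg_of_eq_one_add_mul hf hφ0 hφ p.1) (hφ p.2)))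
  rw [HasAntidiagonal.mem_antidiagonal] at hp
  omega

end PowerSeries

/-- If `f` is a formal power series with constant coefficient `1` such that
`1 - 1/f` has non-negative coefficients, and `(h n)` is a non-decreasing
sequence of non-negative reals, then `g/f` has non-negative coefficients,
where `g = ∑ h n * f n * z^n`. -/
theorem quotient_nonneg_coeffs (f : PowerSeries ℝ) (hf0 : constantCoeff f = 1)
    (hfhat : ∀ n : ℕ, 0 ≤ coeff n (1 - f⁻¹))
    (h : ℕ → ℝ) (hmono : Monotone h) (hnonneg : ∀ n, 0 ≤ h n) :
    ∀ n : ℕ, 0 ≤ coeff n (PowerSeries.mk (fun n => h n * coeff n f) * f⁻¹) := by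
  have hinv : f * f⁻¹ = 1 := PowerSeries.mul_inv_cancel f (by simp [hf0])
  have hf : f = 1 + f * (1 - f⁻¹) := by linear_combination hinv
  have hφ0 : constantCoeff (1 - f⁻¹) = 0 := by simp [hf0]
  intro n
  simpa using coeff_mk_mul_coeff_mul_one_sub_nonneg hmono hnonneg hf hφ0 hfhat n
end

section
/- Let f(z) = Σ_{n≥0} f_n z^n be a formal power series with f_0 = 1 such that all f_n > 0 and all non-constant coefficients of f̂(z) = 1 - 1/f(z) are positive, and let (h_n)_{n≥0} be a strictly increasing sequence of non-negative reals with h_0 = 0. Then all coefficients of g(z)/f(z) are positive except the constant coefficient, which is zero, where g(z) = Σ_{n≥0} h_n f_n z^n. -/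
/-!
Write `A = 1 - f⁻¹`. Since `f * A = f - 1`, for `n ≥ 1` we have `fₙ = ∑_{i+j=n} fᵢ Aⱼ`, and
`g / f = g - g * A` turns the `n`-th coefficient of `g / f` into `∑_{i+j=n} (hₙ - hᵢ) fᵢ Aⱼ`.
The term `j = 0` vanishes and every other term is positive, since `hᵢ < hₙ` for `i < n`.
-/

open PowerSeries Finset

section Field

variable {k : Type*} [Field k]

theorem coeff_eq_sum_coeff_mul_coeff_one_sub_inv {f : k⟦X⟧} (hf : constantCoeff f ≠ 0) {n : ℕ}
    (hn : n ≠ 0) : coeff n f = ∑ p ∈ antidiagonal n, coeff p.1 f * coeff p.2 (1 - f⁻¹) := by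
  have hfA : f * (1 - f⁻¹) = f - 1 := by rw [mul_sub, mul_one, PowerSeries.mul_inv_cancel f hf]
  rw [← coeff_mul, hfA, map_sub, coeff_one, if_neg hn, sub_zero]

theorem coeff_mk_mul_coeff_mul_inv_eq_sum {f : k⟦X⟧} (hf : constantCoeff f ≠ 0) (h : ℕ → k)
    {n : ℕ} (hn : n ≠ 0) :
    coeff n (mk (fun i => h i * coeff i f) * f⁻¹) =
      ∑ p ∈ antidiagonal n, (h n - h p.1) * (coeff p.1 f * coeff p.2 (1 - f⁻¹)) := by
  set g := mk fun i => h i * coeff i f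
  have hg : g * f⁻¹ = g - g * (1 - f⁻¹) := by ring
  rw [hg, map_sub, coeff_mul, coeff_mk, coeff_eq_sum_coeff_mul_coeff_one_sub_inv hf hn, mul_sum,
    ← sum_sub_distrib]
  refine sum_congr rfl fun p _ => ?_
  rw [coeff_mk]
  ring

theorem constantCoeff_mk_mul_coeff_mul_inv {f : k⟦X⟧} (hf : constantCoeff f ≠ 0) (h : ℕ → k) :
    constantCoeff (mk (fun i => h i * coeff i f) * f⁻¹) = h 0 := by
  simp [constantCoeff_inv, hf]

theorem coeff_mk_mul_coeff_mul_inv_pos [LinearOrder k] [IsStrictOrderedRing k] {f : k⟦X⟧}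
    (hfpos : ∀ n, 0 < coeff n f) (hfhat : ∀ n, 0 < n → 0 < coeff n (1 - f⁻¹)) {h : ℕ → k}
    (hmono : StrictMono h) {n : ℕ} (hn : 0 < n) :
    0 < coeff n (mk (fun i => h i * coeff i f) * f⁻¹) := by
  have hf : constantCoeff f ≠ 0 := by simpa using (hfpos 0).ne'
  rw [coeff_mk_mul_coeff_mul_inv_eq_sum hf h hn.ne']
  refine sum_pos' (fun p hp => ?_) ⟨(0, n), by simp, ?_⟩
  · have hpn := mem_antidiagonal.mp hp
    rcases Nat.eq_zero_or_pos p.2 with hp2 | hp2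
    · obtain rfl : p.1 = n := by omega
      simp
    · have hp1 : p.1 < n := by omega
      exact (mul_pos (sub_pos.mpr (hmono hp1)) (mul_pos (hfpos _) (hfhat _ hp2))).le
  · exact mul_pos (sub_pos.mpr (hmono hn)) (mul_pos (hfpos 0) (hfhat n hn))

end Field

theorem quotient_pos_coeffs_general (f : PowerSeries ℝ)
    (hfpos : ∀ n : ℕ, 0 < coeff n f)
    (hfhat : ∀ n : ℕ, 1 ≤ n → 0 < coeff n (1 - f⁻¹))
    (h : ℕ → ℝ) (hmono : StrictMono h) (h0 : h 0 = 0) :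
    (∀ n : ℕ, 1 ≤ n → 0 < coeff n (PowerSeries.mk (fun n => h n * coeff n f) * f⁻¹)) ∧
    coeff 0 (PowerSeries.mk (fun n => h n * coeff n f) * f⁻¹) = 0 := by
  have hf : constantCoeff f ≠ 0 := by simpa using (hfpos 0).ne'
  refine ⟨fun n hn => coeff_mk_mul_coeff_mul_inv_pos hfpos hfhat hmono hn, ?_⟩
  rw [coeff_zero_eq_constantCoeff_apply, constantCoeff_mk_mul_coeff_mul_inv hf, h0]

/-- If `f` is a formal power series with constant coefficient `1`, positive
coefficients, and all non-constant coefficients of `1 - 1/f` positive, and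
`(h n)` is a strictly increasing sequence of non-negative reals with `h 0 = 0`,
then all coefficients of `g/f` are positive except the constant one, which is
zero, where `g = ∑ h n * f n * z^n`. -/
theorem quotient_pos_coeffs (f : PowerSeries ℝ) (hf0 : constantCoeff f = 1)
    (hfpos : ∀ n : ℕ, 0 < coeff n f)
    (hfhat : ∀ n : ℕ, 1 ≤ n → 0 < coeff n (1 - f⁻¹))
    (h : ℕ → ℝ) (hmono : StrictMono h) (hnonneg : ∀ n, 0 ≤ h n) (h0 : h 0 = 0) :
    (∀ n : ℕ, 1 ≤ n → 0 < coeff n (PowerSeries.mk (fun n => h n * coeff n f) * f⁻¹)) ∧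
    coeff 0 (PowerSeries.mk (fun n => h n * coeff n f) * f⁻¹) = 0 :=
  quotient_pos_coeffs_general f hfpos hfhat h hmono h0
end

section
/- For any integer N ≥ 2, letting r_1, …, r_{φ(N)} be the integers in {1,…,N} coprime to N and C_N = N^{φ(N)} ∏_{p | N} p^{φ(N)/(p-1)}, the quantity B_N(m) = C_N^m ∏_{j=1}^{φ(N)} (r_j/N)_m / m! is a positive integer for every integer m ≥ 0. -/
/-!
Since `r/N + k = (r + kN)/N`, we get `N^{mφ(N)} ∏_r (r/N)_m = A`, where `A` is the product of the
integers in `[1, mN]` coprime to `N`, hence `B_N(m) = D^m A / m!^{φ(N)}` with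
`D = ∏_{p ∣ N} p^{φ(N)/(p-1)}`. The divisibility is checked one prime at a time. For `p ∣ N`,
Legendre's formula gives `(p - 1) v_p(m!) ≤ m`, so `D^m` alone suffices. For `q ∤ N`, the integers
in `[1, mN]` coprime to `N` and divisible by `q^i` include `q^i` times those in `[1, ⌊m/q^i⌋N]`,
so there are at least `φ(N)⌊m/q^i⌋` of them; summing over `i` and comparing with Legendre's
formula gives `v_q(A) ≥ φ(N) v_q(m!)`.
-/

/-- The constant `C_N = N^{φ(N)} ∏_{p ∣ N} p^{φ(N)/(p-1)}`. -/
def paperC (N : ℕ) : ℕ := N ^ N.totient * ∏ p ∈ N.primeFactors, p ^ (N.totient / (p - 1))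

/-- The totatives of `N` in `{1,…,N}`. -/
def totSet (N : ℕ) : Finset ℕ := (Finset.Icc 1 N).filter (fun r => Nat.Coprime r N)

open Finset Nat

def coprimeIcc (N n : ℕ) : Finset ℕ := {j ∈ Icc 1 n | j.Coprime N}

@[simp]
theorem mem_coprimeIcc {N n j : ℕ} : j ∈ coprimeIcc N n ↔ (1 ≤ j ∧ j ≤ n) ∧ j.Coprime N := by
  simp [coprimeIcc]

theorem totSet_eq_coprimeIcc (N : ℕ) : totSet N = coprimeIcc N N := rfl

theorem card_totSet (N : ℕ) : #(totSet N) = φ N := by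
  rw [← filter_coprime_Ico_eq_totient N 1, totSet, add_comm, Finset.Ico_add_one_right_eq_Icc]
  simp_rw [Nat.coprime_comm]

@[to_additive]
theorem prod_coprimeIcc_eq_prod_totSet_prod_range {M : Type*} [CommMonoid M] (f : ℕ → M)
    (N m : ℕ) :
    ∏ j ∈ coprimeIcc N (m * N), f j = ∏ r ∈ totSet N, ∏ k ∈ range m, f (r + k * N) := by
  rw [← prod_product' (f := fun r k => f (r + k * N))]
  symm
  refine prod_nbij' (fun x => x.1 + x.2 * N) (fun j => ((j - 1) % N + 1, (j - 1) / N))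
    ?_ ?_ ?_ ?_ (fun _ _ => rfl)
  · rintro ⟨r, k⟩ h
    simp only [totSet_eq_coprimeIcc, mem_product, mem_coprimeIcc, mem_range] at h ⊢
    refine ⟨⟨by omega, by nlinarith⟩, (coprime_add_mul_right_left r N k).mpr h.1.2⟩
  · intro j h
    simp only [totSet_eq_coprimeIcc, mem_product, mem_coprimeIcc, mem_range] at h ⊢
    have hN : 0 < N := Nat.pos_of_ne_zero (by rintro rfl; omega)
    have hj := Nat.mod_add_div (j - 1) N
    refine ⟨⟨⟨by omega, Nat.mod_lt _ hN⟩, ?_⟩, Nat.div_lt_of_lt_mul (by rw [mul_comm]; omega)⟩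
    rw [← coprime_add_mul_right_left _ N ((j - 1) / N)]
    convert h.2 using 1
    rw [mul_comm]; omega
  · rintro ⟨r, k⟩ h
    simp only [totSet_eq_coprimeIcc, mem_product, mem_coprimeIcc, mem_range] at h
    have hN : 0 < N := by omega
    have e : r + k * N - 1 = (r - 1) + k * N := by omega
    simp only [e, Nat.add_mul_mod_self_right, Nat.add_mul_div_right _ _ hN,
      Nat.mod_eq_of_lt (show r - 1 < N by omega), Nat.div_eq_of_lt (show r - 1 < N by omega)]
    ext <;> simp
    omega
  · intro j h
    simp only [mem_coprimeIcc] at h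
    have hj := Nat.mod_add_div (j - 1) N
    show (j - 1) % N + 1 + (j - 1) / N * N = j
    rw [mul_comm]; omega

theorem card_coprimeIcc_mul (N m : ℕ) : #(coprimeIcc N (m * N)) = m * φ N := by
  rw [card_eq_sum_ones, sum_coprimeIcc_eq_sum_totSet_sum_range]
  simp [card_totSet, mul_comm]

theorem le_card_filter_dvd_coprimeIcc {N d : ℕ} (m : ℕ) (hd : 0 < d) (hdN : d.Coprime N) :
    m / d * φ N ≤ #{j ∈ coprimeIcc N (m * N) | d ∣ j} := by
  rw [← card_coprimeIcc_mul, ← card_image_of_injective _ (mul_right_injective₀ hd.ne')]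
  refine card_le_card fun j hj => ?_
  obtain ⟨i, hi, rfl⟩ := mem_image.mp hj
  simp only [mem_filter, mem_coprimeIcc] at hi ⊢
  refine ⟨⟨⟨by nlinarith, ?_⟩, hdN.mul_left hi.2⟩, dvd_mul_right d i⟩
  calc d * i ≤ d * (m / d * N) := Nat.mul_le_mul_left d hi.1.2
    _ = d * (m / d) * N := by ring
    _ ≤ m * N := Nat.mul_le_mul_right N (Nat.mul_div_le m d)

def coprimeProd (N m : ℕ) : ℕ := ∏ j ∈ coprimeIcc N (m * N), j

theorem coprimeProd_pos (N m : ℕ) : 0 < coprimeProd N m :=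
  prod_pos fun _ hj => (mem_coprimeIcc.mp hj).1.1

def totientPrimeProd (N : ℕ) : ℕ := ∏ p ∈ N.primeFactors, p ^ (φ N / (p - 1))

theorem totientPrimeProd_pos (N : ℕ) : 0 < totientPrimeProd N :=
  prod_pos fun _ hp => pow_pos (prime_of_mem_primeFactors hp).pos _

theorem paperC_eq_pow_mul_totientPrimeProd (N : ℕ) :
    paperC N = N ^ φ N * totientPrimeProd N :=
  rfl

theorem sum_card_filter_pow_dvd_le_factorization_prod {s : Finset ℕ} (hs : 0 ∉ s) {q : ℕ}
    (hq : q.Prime) (b : ℕ) :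
    ∑ i ∈ Ico 1 b, #{j ∈ s | q ^ i ∣ j} ≤ (∏ j ∈ s, j).factorization q := by
  have hs' : ∀ j ∈ s, j ≠ 0 := fun j hj h => hs (h ▸ hj)
  rw [factorization_prod_apply hs']
  simp only [card_filter]
  rw [sum_comm]
  refine sum_le_sum fun j hj => ?_
  rw [← card_filter]
  calc #{i ∈ Ico 1 b | q ^ i ∣ j} ≤ #(Icc 1 (j.factorization q)) := card_le_card fun i hi => by
        simp only [mem_filter, mem_Ico, mem_Icc] at hi ⊢
        exact ⟨hi.1.1, (hq.pow_dvd_iff_le_factorization (hs' j hj)).mp hi.2⟩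
    _ = j.factorization q := by simp

theorem totient_mul_factorization_factorial_le_coprimeProd {N q : ℕ} (m : ℕ) (hq : q.Prime)
    (hqN : ¬ q ∣ N) : φ N * (m !).factorization q ≤ (coprimeProd N m).factorization q := by
  rw [factorization_factorial hq (lt_add_one (log q m)), mul_sum]
  calc ∑ i ∈ Ico 1 (log q m + 1), φ N * (m / q ^ i)
      ≤ ∑ i ∈ Ico 1 (log q m + 1), #{j ∈ coprimeIcc N (m * N) | q ^ i ∣ j} :=
        sum_le_sum fun i _ => mul_comm (φ N) _ ▸ le_card_filter_dvd_coprimeIcc m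
          (pow_pos hq.pos i) ((hq.coprime_iff_not_dvd.mpr hqN).pow_left i)
    _ ≤ _ := sum_card_filter_pow_dvd_le_factorization_prod (by simp) hq _

theorem totient_mul_factorization_factorial_le_totientPrimeProd {N p : ℕ} (m : ℕ) (hN : N ≠ 0)
    (hp : p.Prime) (hpN : p ∣ N) :
    φ N * (m !).factorization p ≤ (totientPrimeProd N ^ m).factorization p := by
  obtain ⟨e, he⟩ : p - 1 ∣ φ N := totient_prime hp ▸ totient_dvd_of_dvd hpN
  have hpe : e ≤ (totientPrimeProd N).factorization p := by
    refine (hp.pow_dvd_iff_le_factorization (totientPrimeProd_pos N).ne').mp ?_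
    have hpD : p ^ (φ N / (p - 1)) ∣ totientPrimeProd N :=
      dvd_prod_of_mem _ (mem_primeFactors.mpr ⟨hp, hpN, hN⟩)
    rwa [he, Nat.mul_div_cancel_left _ (Nat.sub_pos_of_lt hp.one_lt)] at hpD
  have hv : (p - 1) * (m !).factorization p ≤ m :=
    (Nat.mul_le_mul_left _ (factorization_factorial_le_div_pred hp m)).trans (Nat.mul_div_le m _)
  rw [Nat.factorization_pow, Finsupp.smul_apply, smul_eq_mul, he]
  calc (p - 1) * e * (m !).factorization p = e * ((p - 1) * (m !).factorization p) := by ring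
    _ ≤ e * m := Nat.mul_le_mul_left e hv
    _ ≤ _ := by rw [mul_comm]; exact Nat.mul_le_mul_left m hpe

theorem factorial_pow_totient_dvd (N m : ℕ) :
    m ! ^ φ N ∣ totientPrimeProd N ^ m * coprimeProd N m := by
  rcases eq_or_ne N 0 with rfl | hN
  · simp
  have hD := (pow_pos (totientPrimeProd_pos N) m).ne'
  have hA := (coprimeProd_pos N m).ne'
  rw [← factorization_le_iff_dvd (pow_ne_zero _ (factorial_ne_zero m)) (mul_ne_zero hD hA)]
  intro p
  by_cases hp : p.Prime
  · rw [Nat.factorization_pow, Nat.factorization_mul hD hA, Finsupp.smul_apply, smul_eq_mul,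
      Finsupp.add_apply]
    by_cases hpN : p ∣ N
    · exact (totient_mul_factorization_factorial_le_totientPrimeProd m hN hp hpN).trans
        (Nat.le_add_right _ _)
    · exact (totient_mul_factorization_factorial_le_coprimeProd m hp hpN).trans
        (Nat.le_add_left _ _)
  · simp [factorization_eq_zero_of_not_prime _ hp]

theorem ascPochhammer_eval_eq_prod_range {R : Type*} [CommSemiring R] (n : ℕ) (x : R) :
    (ascPochhammer R n).eval x = ∏ k ∈ range n, (x + k) := by
  induction n with
  | zero => simp
  | succ n ih => simp [ascPochhammer_succ_right, ih, prod_range_succ]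

theorem pow_mul_ascPochhammer_eval_div {K : Type*} [Field K] (n : ℕ) (x : K) {c : K}
    (hc : c ≠ 0) : c ^ n * (ascPochhammer K n).eval (x / c) = ∏ k ∈ range n, (x + k * c) := by
  rw [ascPochhammer_eval_eq_prod_range, show c ^ n = ∏ _k ∈ range n, c by simp,
    ← prod_mul_distrib]
  refine prod_congr rfl fun k _ => ?_
  field_simp

theorem pow_mul_prod_totSet_ascPochhammer_eval {K : Type*} [Field K] [CharZero K] (N m : ℕ) :
    (N : K) ^ (m * φ N) * ∏ r ∈ totSet N, (ascPochhammer K m).eval ((r : K) / N) =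
      coprimeProd N m := by
  rw [pow_mul, ← card_totSet, ← prod_const, ← prod_mul_distrib, coprimeProd, Nat.cast_prod,
    prod_coprimeIcc_eq_prod_totSet_prod_range]
  refine prod_congr rfl fun r hr => ?_
  have hN : (N : K) ≠ 0 := by
    simp only [totSet_eq_coprimeIcc, mem_coprimeIcc] at hr
    exact Nat.cast_ne_zero.mpr (by omega)
  rw [pow_mul_ascPochhammer_eval_div m _ hN]
  push_cast
  rfl

theorem BN_posint_general (N : ℕ) (m : ℕ) :
    ∃ b : ℕ, 0 < b ∧
      (paperC N : ℝ) ^ m *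
        ∏ r ∈ totSet N, ((ascPochhammer ℝ m).eval ((r : ℝ) / N) / (m.factorial : ℝ))
      = b := by
  have hdvd := factorial_pow_totient_dvd N m
  have hpos := Nat.mul_pos (pow_pos (totientPrimeProd_pos N) m) (coprimeProd_pos N m)
  refine ⟨totientPrimeProd N ^ m * coprimeProd N m / m ! ^ φ N,
    Nat.div_pos (Nat.le_of_dvd hpos hdvd) (by positivity), ?_⟩
  rw [Nat.cast_div hdvd (by positivity), prod_div_distrib, prod_const, card_totSet,
    paperC_eq_pow_mul_totientPrimeProd, Nat.cast_mul, Nat.cast_mul,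
    ← pow_mul_prod_totSet_ascPochhammer_eval (K := ℝ)]
  push_cast
  ring

/-- For `N ≥ 2` and `m ≥ 0`, the quantity
`B_N(m) = C_N^m ∏_{j=1}^{φ(N)} (r_j/N)_m / m!` is a positive integer. -/
theorem BN_posint (N : ℕ) (hN : 2 ≤ N) (m : ℕ) :
    ∃ b : ℕ, 0 < b ∧
      (paperC N : ℝ) ^ m *
        ∏ r ∈ totSet N, ((ascPochhammer ℝ m).eval ((r : ℝ) / N) / (m.factorial : ℝ))
      = b :=
  BN_posint_general N m
end

section
/- For integers N_1, …, N_k all at least 2, define B_N(m) = ∏_{j=1}^k C_{N_j}^m ∏_{i=1}^{φ(N_j)} (r_{i,j}/N_j)_m / m!, where for each j the r_{i,j} are the residues in {1,…,N_j} coprime to N_j. Then B_N(1) > 0 and B_N(m+1) B_N(m-1) > B_N(m)^2 for all m ≥ 1. -/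
/-- `B_N(m) = ∏_j C_{N_j}^m ∏_i (r_{i,j}/N_j)_m / m!`. -/
noncomputable def paperB {k : ℕ} (N : Fin k → ℕ) (m : ℕ) : ℝ :=
  ∏ j : Fin k, ((paperC (N j) : ℝ) ^ m *
    ∏ r ∈ totSet (N j), ((ascPochhammer ℝ m).eval ((r : ℝ) / (N j)) / (m.factorial : ℝ)))

/-!
`B_N(m+1) = B_N(m) R_N(m)` with `R_N(m) = ∏_j C_{N_j} ∏_i (r_{i,j}/N_j + m)/(m + 1)`, and each
factor `(x + m)/(m + 1)` with `0 < x < 1` is strictly increasing in `m`. A positive sequence whose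
successive ratios strictly increase is strictly log-convex.
-/

open Finset

theorem sq_lt_mul_of_ratio_strictMono {K : Type*} [CommRing K] [LinearOrder K]
    [IsStrictOrderedRing K] {b r : ℕ → K} (hb : ∀ m, 0 < b m)
    (hbr : ∀ m, b (m + 1) = b m * r m) (hr : StrictMono r) (n : ℕ) :
    b (n + 1) ^ 2 < b (n + 2) * b n := by
  have hrn : 0 < r n := pos_of_mul_pos_right (hbr n ▸ hb (n + 1)) (hb n).le
  have hsq : 0 < b n ^ 2 := pow_pos (hb n) 2
  rw [hbr (n + 1), hbr n]
  nlinarith [mul_lt_mul_of_pos_left (hr n.lt_succ_self) (mul_pos hsq hrn)]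

theorem ascPochhammer_eval_succ_div_factorial {K : Type*} [Field K] [CharZero K] (x : K) (m : ℕ) :
    (ascPochhammer K (m + 1)).eval x / ((m + 1).factorial : K) =
      (ascPochhammer K m).eval x / (m.factorial : K) * ((x + m) / (m + 1)) := by
  have hm : (m : K) + 1 ≠ 0 := by exact_mod_cast m.succ_ne_zero
  have hfac : (m.factorial : K) ≠ 0 := by exact_mod_cast m.factorial_ne_zero
  rw [ascPochhammer_succ_eval, Nat.factorial_succ]
  push_cast
  field_simp

theorem strictMono_add_div_add_one {K : Type*} [Field K] [LinearOrder K] [IsStrictOrderedRing K]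
    {x : K} (hx : x < 1) : StrictMono fun m : ℕ => (x + m) / (m + 1) := by
  refine strictMono_nat_of_lt_succ fun m => ?_
  rw [div_lt_div_iff₀ (by positivity) (by positivity)]
  push_cast
  nlinarith

theorem one_mem_totSet {N : ℕ} (hN : N ≠ 0) : 1 ∈ totSet N := by
  simp [totSet, Nat.one_le_iff_ne_zero.mpr hN]

theorem div_mem_Ioo_of_mem_totSet {N r : ℕ} (hN : N ≠ 1) (hr : r ∈ totSet N) :
    (r : ℝ) / N ∈ Set.Ioo 0 1 := by
  simp only [totSet, mem_filter, mem_Icc] at hr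
  obtain ⟨⟨hr1, hrN⟩, hcop⟩ := hr
  have hlt : r < N := hrN.lt_of_ne (by rintro rfl; exact hN (by simpa [Nat.Coprime] using hcop))
  have hN0 : (0 : ℝ) < N := Nat.cast_pos.mpr (Nat.zero_lt_of_lt hlt)
  exact ⟨by positivity, (div_lt_one hN0).mpr (by exact_mod_cast hlt)⟩

theorem paperC_pos {N : ℕ} (hN : 0 < N) : 0 < paperC N :=
  Nat.mul_pos (Nat.pow_pos hN)
    (prod_pos fun _ hp => Nat.pow_pos (Nat.pos_of_mem_primeFactors hp))

theorem paperB_pos {k : ℕ} {N : Fin k → ℕ} (hN : ∀ j, 1 < N j) (m : ℕ) : 0 < paperB N m := by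
  refine prod_pos fun j _ => mul_pos ?_ (prod_pos fun r hr => div_pos ?_ (by positivity))
  · exact pow_pos (by exact_mod_cast paperC_pos (zero_lt_one.trans (hN j))) m
  · exact ascPochhammer_pos m _ (div_mem_Ioo_of_mem_totSet (hN j).ne' hr).1

noncomputable def paperR {k : ℕ} (N : Fin k → ℕ) (m : ℕ) : ℝ :=
  ∏ j : Fin k, ((paperC (N j) : ℝ) * ∏ r ∈ totSet (N j), (((r : ℝ) / (N j) + m) / (m + 1)))

theorem paperB_succ {k : ℕ} (N : Fin k → ℕ) (m : ℕ) :
    paperB N (m + 1) = paperB N m * paperR N m := by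
  simp only [paperB, paperR, ← prod_mul_distrib, ascPochhammer_eval_succ_div_factorial, pow_succ]
  refine prod_congr rfl fun j _ => ?_
  rw [prod_mul_distrib]
  ring

theorem paperR_strictMono {k : ℕ} (hk : 0 < k) {N : Fin k → ℕ} (hN : ∀ j, 1 < N j) :
    StrictMono (paperR N) := by
  refine strictMono_nat_of_lt_succ fun m => ?_
  have hx := fun j r (hr : r ∈ totSet (N j)) => div_mem_Ioo_of_mem_totSet (hN j).ne' hr
  have hC := fun j => (Nat.cast_pos (α := ℝ)).mpr (paperC_pos (zero_lt_one.trans (hN j)))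
  refine prod_lt_prod_of_nonempty
    (fun j _ => mul_pos (hC j) (prod_pos fun r hr => ?_))
    (fun j _ => mul_lt_mul_of_pos_left (prod_lt_prod_of_nonempty (fun r hr => ?_)
      (fun r hr => strictMono_add_div_add_one (hx j r hr).2 m.lt_succ_self)
      ⟨1, one_mem_totSet (zero_lt_one.trans (hN j)).ne'⟩) (hC j))
    ⟨⟨0, hk⟩, mem_univ _⟩
  all_goals have := (hx _ r hr).1; positivity

/-- For `N_1, …, N_k ≥ 2`, the sequence `(B_N(m))` satisfies `B_N(1) > 0` and is
strictly log-convex: `B_N(m+1) B_N(m-1) > B_N(m)^2` for `m ≥ 1`. -/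
theorem BN_strict_logconvex {k : ℕ} (hk : 0 < k) (N : Fin k → ℕ) (hN : ∀ j, 2 ≤ N j) :
    0 < paperB N 1 ∧ ∀ m : ℕ, 1 ≤ m → paperB N m ^ 2 < paperB N (m + 1) * paperB N (m - 1) := by
  refine ⟨paperB_pos hN 1, fun m hm => ?_⟩
  obtain ⟨n, rfl⟩ := Nat.exists_eq_add_of_le' hm
  exact sq_lt_mul_of_ratio_strictMono (paperB_pos hN) (paperB_succ N) (paperR_strictMono hk hN) n
end

section
/- For every real x ≥ 1, Γ(x+1) = √(2πx)·(x/e)^x·e^{λ_x} for some λ_x with 1/(12x+1) < λ_x < 1/(12x). In particular √(2πx)(x/e)^x e^{1/(12x+1)} < Γ(x+1) < √(2πx)(x/e)^x e^{1/(12x)}. -/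
/-!
Write `Γ(x + 1) = √(2πx) (x/e)^x e^{μ(x)}` (`μ = stirlingRemainder`). The functional equation
gives `μ(t) - μ(t + 1) = (t + 1/2) log (1 + 1/t) - 1`, and expanding the logarithm in powers of
`1/(2t + 1)` turns this difference into `∑_{k ≥ 1} (2t + 1)^{-2k} / (2k + 1)`, a series of
positive terms lying strictly between `1/(12t + 1) - 1/(12(t + 1) + 1)` (its first term) and
`1/(12t) - 1/(12(t + 1))` (a geometric majorant). Stirling's formula for `n!` together with
`Γ(x + n + 1) ~ n! n^x` (the Euler limit) gives `μ(x + n) → 0`, so `μ(x)` is the sum of these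
differences at `x, x + 1, x + 2, …`, and both bounds telescope.
-/

open Real Filter Topology

noncomputable def stirlingRemainder (x : ℝ) : ℝ :=
  log (Gamma (x + 1)) - ((x + 1 / 2) * log x - x + log (2 * π) / 2)

noncomputable def stirlingStep (t : ℝ) : ℝ := (t + 1 / 2) * log (1 + t⁻¹) - 1

theorem hasSum_sub_add_one_of_antitone {f : ℕ → ℝ} {l : ℝ} (hf : Antitone f)
    (h : Tendsto f atTop (𝓝 l)) : HasSum (fun n ↦ f n - f (n + 1)) (f 0 - l) := by
  rw [hasSum_iff_tendsto_nat_of_nonneg (fun n ↦ sub_nonneg.2 (hf n.le_succ))]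
  simp_rw [Finset.sum_range_sub']
  exact tendsto_const_nhds.sub h

theorem hasSum_one_div_mul_add_sub {a c x : ℝ} (ha : 0 < a) (hx : 0 < a * x + c) :
    HasSum (fun n : ℕ ↦ 1 / (a * (x + n) + c) - 1 / (a * (x + n + 1) + c))
      (1 / (a * x + c)) := by
  have hpos (n : ℕ) : 0 < a * (x + n) + c := by
    nlinarith [mul_nonneg ha.le (Nat.cast_nonneg (α := ℝ) n)]
  have hanti : Antitone fun n : ℕ ↦ 1 / (a * (x + n) + c) :=
    antitone_nat_of_succ_le fun n ↦ by
      have := hpos n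
      push_cast
      gcongr
      linarith
  have hlim : Tendsto (fun n : ℕ ↦ 1 / (a * (x + n) + c)) atTop (𝓝 0) :=
    tendsto_const_nhds.div_atTop <| tendsto_atTop_add_const_right _ _ <|
      (tendsto_atTop_add_const_left _ _ tendsto_natCast_atTop_atTop).const_mul_atTop ha
  simpa [add_assoc] using hasSum_sub_add_one_of_antitone hanti hlim

theorem hasSum_stirlingStep {t : ℝ} (ht : 0 < t) :
    HasSum (fun k : ℕ ↦ 1 / (2 * (k + 1 : ℝ) + 1) * ((1 / (2 * t + 1)) ^ 2) ^ (k + 1))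
      (stirlingStep t) := by
  have h := (hasSum_log_one_add_inv ht).mul_left (t + 1 / 2)
  have hterm :
      (fun k : ℕ ↦ (t + 1 / 2) * (2 * (1 / (2 * k + 1)) * (1 / (2 * t + 1)) ^ (2 * k + 1)))
        = fun k : ℕ ↦ 1 / (2 * (k : ℝ) + 1) * ((1 / (2 * t + 1)) ^ 2) ^ k := by
    ext k
    rw [← pow_mul, pow_succ]
    field_simp
  rw [hterm, ← hasSum_nat_add_iff' 1] at h
  simpa [stirlingStep] using h

theorem stirlingStep_pos {t : ℝ} (ht : 0 < t) : 0 < stirlingStep t :=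
  hasSum_lt (f := 0) (i := 0) (fun k ↦ by positivity) (by simp; positivity) hasSum_zero
    (hasSum_stirlingStep ht)

theorem stirlingStep_lt {t : ℝ} (ht : 0 < t) :
    stirlingStep t < 1 / (12 * t) - 1 / (12 * (t + 1)) := by
  have hstep := hasSum_stirlingStep ht
  have hr0 : 0 < (1 / (2 * t + 1)) ^ 2 := by positivity
  have hr1 : (1 / (2 * t + 1)) ^ 2 < 1 := by
    rw [div_pow, one_pow, div_lt_one (by positivity)]; nlinarith
  have hsum : (1 / (2 * t + 1)) ^ 2 * (1 - (1 / (2 * t + 1)) ^ 2)⁻¹ / 3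
      = 1 / (12 * t) - 1 / (12 * (t + 1)) := by
    rw [show 1 - (1 / (2 * t + 1)) ^ 2 = 4 * t * (t + 1) / (2 * t + 1) ^ 2 by field_simp; ring]
    field_simp
    ring
  generalize (1 / (2 * t + 1)) ^ 2 = r at hstep hsum hr0 hr1
  have hgeom := ((hasSum_geometric_of_lt_one hr0.le hr1).mul_left r).div_const 3
  simp_rw [← pow_succ', hsum] at hgeom
  refine hasSum_lt (i := 1) (fun k ↦ ?_) ?_ hstep hgeom
  · have hk : 1 / (2 * ((k : ℝ) + 1) + 1) ≤ 1 / 3 := by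
      gcongr
      linarith [Nat.cast_nonneg (α := ℝ) k]
    linarith [mul_le_mul_of_nonneg_right hk (pow_nonneg hr0.le (k + 1))]
  · norm_num
    linarith [pow_pos hr0 2]

theorem stirlingStep_gt {t : ℝ} (ht : 1 ≤ t) :
    1 / (12 * t + 1) - 1 / (12 * (t + 1) + 1) < stirlingStep t := by
  have hfirst : 1 / (3 * (2 * t + 1) ^ 2) ≤ stirlingStep t := by
    refine Eq.trans_le ?_
      (le_hasSum (hasSum_stirlingStep (by linarith)) 0 fun k _ ↦ by positivity)
    norm_num
    ring
  refine lt_of_lt_of_le ?_ hfirst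
  rw [div_sub_div _ _ (by positivity) (by positivity),
    div_lt_div_iff₀ (by positivity) (by positivity)]
  -- after clearing denominators this is `24 t > 23`
  nlinarith

theorem log_Gamma_add_one {y : ℝ} (hy : 0 < y) :
    log (Gamma (y + 1)) = log (Gamma y) + log y := by
  rw [Gamma_add_one hy.ne', log_mul hy.ne' (Gamma_pos_of_pos hy).ne', add_comm]

theorem stirlingRemainder_sub_stirlingRemainder_add_one {t : ℝ} (ht : 0 < t) :
    stirlingRemainder t - stirlingRemainder (t + 1) = stirlingStep t := by
  have hlog : log (1 + t⁻¹) = log (t + 1) - log t := by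
    rw [← log_div (by positivity) ht.ne', add_div, div_self ht.ne', one_div]
  rw [stirlingRemainder, stirlingRemainder, stirlingStep,
    log_Gamma_add_one (y := t + 1) (by positivity), hlog]
  ring

theorem stirlingRemainder_natCast {n : ℕ} (hn : n ≠ 0) :
    stirlingRemainder n = log (Stirling.stirlingSeq n) - log π / 2 := by
  rw [stirlingRemainder, Gamma_nat_eq_factorial, Stirling.log_stirlingSeq_formula,
    log_mul two_ne_zero pi_ne_zero, log_mul two_ne_zero (Nat.cast_ne_zero.2 hn),
    log_div (by positivity) (exp_pos 1).ne', log_exp]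
  ring

theorem tendsto_stirlingRemainder_natCast :
    Tendsto (fun n : ℕ ↦ stirlingRemainder n) atTop (𝓝 0) := by
  have h := ((continuousAt_log (by positivity)).tendsto.comp
    Stirling.tendsto_stirlingSeq_sqrt_pi).sub_const (log π / 2)
  rw [log_sqrt pi_pos.le, sub_self] at h
  refine h.congr' ?_
  filter_upwards [eventually_ne_atTop 0] with n hn
  exact (stirlingRemainder_natCast hn).symm

theorem tendsto_log_Gamma_add_natCast_sub {x : ℝ} (hx : 0 < x) :
    Tendsto (fun n : ℕ ↦ log (Gamma (x + n + 1)) - log (Gamma (n + 1)) - x * log n)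
      atTop (𝓝 0) := by
  have h := (BohrMollerup.tendsto_log_gamma hx).const_sub (log (Gamma x))
  rw [sub_self] at h
  refine h.congr fun n ↦ ?_
  have hsum := BohrMollerup.f_add_nat_eq (f := log ∘ Gamma)
    (fun hy ↦ log_Gamma_add_one hy) hx (n + 1)
  simp only [Function.comp_apply, Nat.cast_add, Nat.cast_one] at hsum
  rw [BohrMollerup.logGammaSeq, add_assoc x, hsum, Gamma_nat_eq_factorial]
  ring

theorem stirlingRemainder_add_natCast {x : ℝ} (hx : 0 ≤ x) {n : ℕ} (hn : n ≠ 0) :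
    stirlingRemainder (x + n) = (log (Gamma (x + n + 1)) - log (Gamma (n + 1)) - x * log n)
      + stirlingRemainder n - ((n + x + 1 / 2) * log (1 + x / n) - x) := by
  have hn' : (0 : ℝ) < n := by positivity
  have hlog : log (x + n) = log n + log (1 + x / n) := by
    rw [← log_mul hn'.ne' (by positivity), mul_add, mul_one, mul_div_cancel₀ _ hn'.ne',
      add_comm]
  rw [stirlingRemainder, stirlingRemainder, hlog]
  ring

theorem tendsto_add_mul_log_one_add_div (x : ℝ) :
    Tendsto (fun n : ℕ ↦ (n + x + 1 / 2) * log (1 + x / n)) atTop (𝓝 x) := by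
  have hlog : Tendsto (fun s : ℝ ↦ log (1 + x / s)) atTop (𝓝 0) := by
    have h : Tendsto (fun s : ℝ ↦ 1 + x / s) atTop (𝓝 1) := by
      simpa using ((tendsto_const_nhds (x := x)).div_atTop tendsto_id).const_add (1 : ℝ)
    simpa [Function.comp_def] using (continuousAt_log one_ne_zero).tendsto.comp h
  have h := (tendsto_mul_log_one_add_div_atTop x).add (hlog.const_mul (x + 1 / 2))
  rw [mul_zero, add_zero] at h
  exact (h.comp tendsto_natCast_atTop_atTop).congr fun n ↦ by
    simp only [Function.comp_apply]
    ring

theorem tendsto_stirlingRemainder_add_natCast {x : ℝ} (hx : 0 < x) :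
    Tendsto (fun n : ℕ ↦ stirlingRemainder (x + n)) atTop (𝓝 0) := by
  have h := ((tendsto_log_Gamma_add_natCast_sub hx).add tendsto_stirlingRemainder_natCast).sub
    ((tendsto_add_mul_log_one_add_div x).sub_const x)
  rw [add_zero, sub_self, sub_zero] at h
  refine h.congr' ?_
  filter_upwards [eventually_ne_atTop 0] with n hn
  exact (stirlingRemainder_add_natCast hx.le hn).symm

theorem hasSum_stirlingStep_add_natCast {x : ℝ} (hx : 0 < x) :
    HasSum (fun n : ℕ ↦ stirlingStep (x + n)) (stirlingRemainder x) := by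
  have hstep (n : ℕ) : stirlingRemainder (x + n) - stirlingRemainder (x + (n + 1 : ℕ))
      = stirlingStep (x + n) := by
    rw [Nat.cast_succ, ← add_assoc]
    exact stirlingRemainder_sub_stirlingRemainder_add_one (by positivity)
  have hanti : Antitone fun n : ℕ ↦ stirlingRemainder (x + n) :=
    antitone_nat_of_succ_le fun n ↦ by
      linarith [hstep n, stirlingStep_pos (t := x + n) (by positivity)]
  convert hasSum_sub_add_one_of_antitone hanti (tendsto_stirlingRemainder_add_natCast hx) using 1
  · exact funext fun n ↦ (hstep n).symm
  · simp

theorem Gamma_add_one_eq_stirling {x : ℝ} (hx : 0 < x) :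
    Gamma (x + 1) = √(2 * π * x) * (x / exp 1) ^ x * exp (stirlingRemainder x) := by
  have hsqrt : √(2 * π * x) = exp ((log (2 * π) + log x) / 2) := by
    rw [← log_mul (by positivity) hx.ne', ← log_sqrt (by positivity), exp_log (by positivity)]
  have hrpow : (x / exp 1) ^ x = exp (x * (log x - 1)) := by
    rw [rpow_def_of_pos (by positivity), log_div hx.ne' (exp_pos 1).ne', log_exp, mul_comm]
  rw [← exp_log (Gamma_pos_of_pos (by positivity : 0 < x + 1)), hsqrt, hrpow, ← exp_add,
    ← exp_add, stirlingRemainder]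
  congr 1
  ring

/-- Effective Stirling formula: for real `x ≥ 1`,
`Γ(x+1) = √(2πx)·(x/e)^x·e^{λ_x}` with `1/(12x+1) < λ_x < 1/(12x)`. -/
theorem stirling_effective (x : ℝ) (hx : 1 ≤ x) :
    ∃ l : ℝ, 1 / (12 * x + 1) < l ∧ l < 1 / (12 * x) ∧
      Real.Gamma (x + 1) = Real.sqrt (2 * π * x) * (x / Real.exp 1) ^ x * Real.exp l := by
  have hx0 : 0 < x := by linarith
  have hxn (n : ℕ) : 1 ≤ x + n := by linarith [Nat.cast_nonneg (α := ℝ) n]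
  have hsum := hasSum_stirlingStep_add_natCast hx0
  refine ⟨stirlingRemainder x, ?_, ?_, Gamma_add_one_eq_stirling hx0⟩
  · exact hasSum_lt (fun n ↦ (stirlingStep_gt (hxn n)).le) (stirlingStep_gt (hxn 0))
      (hasSum_one_div_mul_add_sub (by norm_num) (by positivity)) hsum
  · have hupper :
        HasSum (fun n : ℕ ↦ 1 / (12 * (x + n)) - 1 / (12 * (x + n + 1))) (1 / (12 * x)) := by
      simpa using hasSum_one_div_mul_add_sub (c := 0) (by norm_num : (0 : ℝ) < 12) (by positivity)
    exact hasSum_lt (i := 0) (fun n : ℕ ↦ (stirlingStep_lt (by positivity)).le)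
      (stirlingStep_lt (by positivity)) hsum hupper
end
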